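/- arXiv:2002.02676 — 4 statements merged into one kernel-verified Lean document; each statement's English description precedes it below -/
import Mathlib

section
/- Let v : R^3 → R satisfy |v(y)| ≤ C ⟨y⟩^{-β} with β > 3. Then there is a constant C' such that for every n ≥ 1 and every x ∈ R^3, the iterated integral ∫_{R^{3n}} (∏_{j=1}^n |v(y_j)|) / (∏_{j=1}^n |y_j - y_{j-1}|) dy_1⋯dy_n ≤ (C')^n ⟨x⟩^{-1}, where y_0 = x. -/
/-!
Write `d ≥ 2` for the dimension and use the weight `1 + ‖y‖`, comparable to `⟨y⟩`. The case
`n = 1` is the bound `∫ (1 + ‖y‖)^{-γ} ‖y - x‖⁻¹ dy ≲ (1 + ‖x‖)⁻¹` for `γ > d`: on the ball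
`‖y - x‖ < (1 + ‖x‖)/2` the weight is `≲ (1 + ‖x‖)^{-γ}` while `‖y - x‖⁻¹` integrates to
`≲ (1 + ‖x‖)^{d-1}`; off that ball `‖y - x‖⁻¹ ≲ (1 + ‖x‖)⁻¹` and the weight is integrable.
Integrating out `y₁` first gives `Iₙ₊₁(x) = ∫ w(a) ‖a - x‖⁻¹ Iₙ(a) da`, so as `(1 + ‖a‖)⁻¹ ≤ 1`
every further variable costs one more factor of the `n = 1` constant.
-/

open MeasureTheory Metric Set ENNReal Module

section Weights

variable {E : Type*} [NormedAddCommGroup E]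

lemma one_add_norm_div_two_le_of_mem_ball {x y : E} (hy : y ∈ ball x ((1 + ‖x‖) / 2)) :
    (1 + ‖x‖) / 2 ≤ 1 + ‖y‖ := by
  rw [mem_ball, dist_eq_norm] at hy
  linarith [norm_le_norm_add_norm_sub' x y, norm_sub_rev x y]

lemma inv_one_add_norm_le_rpow_neg_one_add_norm_sq (x : E) :
    (1 + ‖x‖)⁻¹ ≤ (1 + ‖x‖ ^ 2) ^ (-(1 / 2 : ℝ)) := by
  rw [Real.rpow_neg (by positivity), ← Real.sqrt_eq_rpow]
  exact inv_anti₀ (by positivity) (sqrt_one_add_norm_sq_le x)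

lemma ofReal_norm_prod_div_prod_le {ι : Type*} (s : Finset ι) {a b c : ι → ℝ}
    (hac : ∀ i ∈ s, ‖a i‖ ≤ c i) (hb : ∀ i ∈ s, 0 ≤ b i) :
    ENNReal.ofReal ‖(∏ i ∈ s, a i) / ∏ i ∈ s, b i‖ ≤ ∏ i ∈ s, ENNReal.ofReal (c i / b i) := by
  have hcb : ∀ i ∈ s, 0 ≤ c i / b i := fun i hi ↦
    div_nonneg ((norm_nonneg _).trans (hac i hi)) (hb i hi)
  rw [← Finset.prod_div_distrib, norm_prod, ← ENNReal.ofReal_prod_of_nonneg hcb]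
  refine ENNReal.ofReal_le_ofReal (Finset.prod_le_prod (fun _ _ ↦ norm_nonneg _) fun i hi ↦ ?_)
  rw [norm_div, Real.norm_of_nonneg (hb i hi)]
  exact div_le_div_of_nonneg_right (hac i hi) (hb i hi)

end Weights

section ChainIntegral

variable {α : Type*} [MeasurableSpace α] (μ : Measure α) (k : α → α → ℝ≥0∞)

lemma lintegral_pi_fin_succ [SigmaFinite μ] {n : ℕ} {F : (Fin (n + 1) → α) → ℝ≥0∞}
    (hF : Measurable F) :
    ∫⁻ y, F y ∂Measure.pi (fun _ ↦ μ) =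
      ∫⁻ a, ∫⁻ z, F (Fin.cons a z) ∂Measure.pi (fun _ ↦ μ) ∂μ := by
  set e := MeasurableEquiv.piFinSuccAbove (fun _ : Fin (n + 1) ↦ α) 0
  rw [← (measurePreserving_piFinSuccAbove (fun _ ↦ μ) 0).symm.lintegral_comp_emb
    e.symm.measurableEmbedding]
  refine (lintegral_prod _ (hF.comp e.symm.measurable).aemeasurable).trans ?_
  simp only [e, MeasurableEquiv.piFinSuccAbove_symm_apply, Fin.insertNthEquiv_zero]
  rfl

/-- `∫ ∏ⱼ k yⱼ yⱼ₋₁ dy₁ ⋯ dyₙ` with `y₀ = x`. -/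
noncomputable def chainLIntegral (n : ℕ) (x : α) : ℝ≥0∞ :=
  ∫⁻ y : Fin n → α, ∏ j, k (y j) ((Fin.cons x y : Fin (n + 1) → α) j.castSucc)
    ∂Measure.pi fun _ ↦ μ

lemma measurable_fin_cons_apply {n : ℕ} (x : α) (i : Fin (n + 1)) :
    Measurable fun y : Fin n → α ↦ (Fin.cons x y : Fin (n + 1) → α) i := by
  cases i using Fin.cases with
  | zero => exact measurable_const
  | succ i => exact measurable_pi_apply i

variable {μ k}

lemma measurable_chain_integrand (hk : Measurable (Function.uncurry k)) {n : ℕ} (x : α) :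
    Measurable fun y : Fin n → α ↦ ∏ j, k (y j) ((Fin.cons x y : Fin (n + 1) → α) j.castSucc) :=
  Finset.measurable_prod _ fun j _ ↦
    hk.comp ((measurable_pi_apply j).prodMk (measurable_fin_cons_apply x j.castSucc))

lemma chainLIntegral_zero (x : α) : chainLIntegral μ k 0 x = 1 := by
  simp [chainLIntegral]

lemma chainLIntegral_succ [SigmaFinite μ] (hk : Measurable (Function.uncurry k)) (n : ℕ)
    (x : α) : chainLIntegral μ k (n + 1) x = ∫⁻ a, k a x * chainLIntegral μ k n a ∂μ := by
  rw [chainLIntegral, lintegral_pi_fin_succ μ (measurable_chain_integrand hk x)]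
  refine lintegral_congr fun a ↦ ?_
  simp only [Fin.prod_univ_succ, Fin.cons_zero, Fin.castSucc_zero, ← Fin.succ_castSucc,
    Fin.cons_succ]
  exact lintegral_const_mul _ (measurable_chain_integrand hk a)

lemma chainLIntegral_succ_le_of_le [SigmaFinite μ] (hk : Measurable (Function.uncurry k))
    {n : ℕ} {M : ℝ≥0∞} (hM : ∀ a, chainLIntegral μ k n a ≤ M) (x : α) :
    chainLIntegral μ k (n + 1) x ≤ (∫⁻ a, k a x ∂μ) * M := by
  rw [chainLIntegral_succ hk]
  calc _ ≤ ∫⁻ a, k a x * M ∂μ := lintegral_mono fun a ↦ by gcongr; exact hM a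
    _ = _ := lintegral_mul_const _ (hk.comp measurable_prodMk_right)

lemma chainLIntegral_le_pow [SigmaFinite μ] (hk : Measurable (Function.uncurry k)) {D : ℝ≥0∞}
    (hD : ∀ x, ∫⁻ a, k a x ∂μ ≤ D) (n : ℕ) (x : α) : chainLIntegral μ k n x ≤ D ^ n := by
  induction n generalizing x with
  | zero => simp [chainLIntegral_zero]
  | succ n ih =>
    calc chainLIntegral μ k (n + 1) x ≤ (∫⁻ a, k a x ∂μ) * D ^ n :=
          chainLIntegral_succ_le_of_le hk ih x
      _ ≤ D ^ (n + 1) := by rw [pow_succ']; gcongr; exact hD x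

lemma chainLIntegral_succ_le [SigmaFinite μ] (hk : Measurable (Function.uncurry k))
    {D : ℝ≥0∞} {w : α → ℝ≥0∞} (hD : ∀ x, ∫⁻ a, k a x ∂μ ≤ D * w x) (hw : ∀ x, w x ≤ 1)
    (n : ℕ) (x : α) : chainLIntegral μ k (n + 1) x ≤ D ^ (n + 1) * w x := by
  have hD' : ∀ x, ∫⁻ a, k a x ∂μ ≤ D := fun x ↦ (hD x).trans (mul_le_of_le_one_right' (hw x))
  calc chainLIntegral μ k (n + 1) x ≤ (∫⁻ a, k a x ∂μ) * D ^ n :=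
        chainLIntegral_succ_le_of_le hk (chainLIntegral_le_pow hk hD' n) x
    _ ≤ D * w x * D ^ n := by gcongr; exact hD x
    _ = D ^ (n + 1) * w x := by ring

lemma integral_le_of_chainLIntegral_le {n : ℕ} {x : α} {f : (Fin n → α) → ℝ}
    (hf : ∀ y, ENNReal.ofReal ‖f y‖ ≤ ∏ j, k (y j) ((Fin.cons x y : Fin (n + 1) → α) j.castSucc))
    {c : ℝ} (hc : 0 ≤ c) (hchain : chainLIntegral μ k n x ≤ ENNReal.ofReal c) :
    ∫ y, f y ∂Measure.pi (fun _ ↦ μ) ≤ c :=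
  (Real.le_norm_self _).trans <| (norm_integral_le_lintegral_norm _).trans <|
    ENNReal.toReal_le_of_le_ofReal hc ((lintegral_mono hf).trans hchain)

end ChainIntegral

lemma setLIntegral_compl_ball_div_norm_sub_le {E : Type*} [SeminormedAddCommGroup E]
    [MeasurableSpace E] [OpensMeasurableSpace E] (μ : Measure E) {g : E → ℝ}
    (hg : ∀ y, 0 ≤ g y) (x : E) {R : ℝ} (hR : 0 < R) :
    ∫⁻ y in (ball x R)ᶜ, ENNReal.ofReal (g y / ‖y - x‖) ∂μ ≤
      (∫⁻ y, ENNReal.ofReal (g y) ∂μ) * ENNReal.ofReal R⁻¹ := by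
  rw [← lintegral_mul_const' _ _ ofReal_ne_top]
  refine (setLIntegral_mono' measurableSet_ball.compl fun y hy ↦ ?_).trans
    (setLIntegral_le_lintegral _ _)
  have hfar : R ≤ ‖y - x‖ := by simpa [dist_eq_norm] using hy
  rw [← ENNReal.ofReal_mul (hg y)]
  exact ENNReal.ofReal_le_ofReal ((div_eq_mul_inv _ _).trans_le (by gcongr; exact hg y))

lemma lintegral_Ioi_inv_pow_le {d : ℕ} (hd : 2 ≤ d) {c : ℝ} (hc : 0 < c) :
    ∫⁻ t in Ioi c, ENNReal.ofReal (t⁻¹ ^ d) ≤ ENNReal.ofReal (c⁻¹ ^ (d - 1)) := by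
  obtain ⟨d, rfl⟩ := Nat.exists_eq_add_of_le' hd
  have hexp : -((d + 2 : ℕ) : ℝ) < -1 := by push_cast; linarith [d.cast_nonneg (α := ℝ)]
  have hrpow : ∀ t ∈ Ioi c,
      ENNReal.ofReal (t⁻¹ ^ (d + 2)) = ENNReal.ofReal (t ^ (-((d + 2 : ℕ) : ℝ))) :=
    fun t ht ↦ by rw [Real.rpow_neg (hc.trans ht).le, Real.rpow_natCast, inv_pow]
  rw [setLIntegral_congr_fun measurableSet_Ioi hrpow,
    ← ofReal_integral_eq_lintegral_ofReal (integrableOn_Ioi_rpow_of_lt hexp hc)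
      ((ae_restrict_iff' measurableSet_Ioi).2 (.of_forall fun t ht ↦
        Real.rpow_nonneg (hc.trans ht).le _)),
    integral_Ioi_rpow_of_lt hexp hc, show d + 2 - 1 = d + 1 from rfl,
    show -((d + 2 : ℕ) : ℝ) + 1 = -((d + 1 : ℕ) : ℝ) by push_cast; ring,
    Real.rpow_neg hc.le, Real.rpow_natCast, ← inv_pow, neg_div_neg_eq]
  exact ENNReal.ofReal_le_ofReal (div_le_self (by positivity) (by simp))

section AddHaar

variable {E : Type*} [NormedAddCommGroup E] [NormedSpace ℝ E] [FiniteDimensional ℝ E]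
  [MeasurableSpace E] [BorelSpace E] (μ : Measure E) [μ.IsAddHaarMeasure]

lemma lintegral_ball_inv_norm_sub_le (hd : 2 ≤ finrank ℝ E) (x : E) {R : ℝ} (hR : 0 < R) :
    ∫⁻ y in ball x R, ENNReal.ofReal ‖y - x‖⁻¹ ∂μ ≤
      ENNReal.ofReal (2 * μ.real (ball 0 1) * R ^ (finrank ℝ E - 1)) := by
  set d := finrank ℝ E
  set ν := μ.restrict (ball x R)
  have hpow : R ^ d * R⁻¹ = R ^ (d - 1) := by
    rw [pow_sub₀ _ hR.ne' (by omega), pow_one]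
  -- Layer cake: a level `t ≤ R⁻¹` sees at most the whole ball, a level `t > R⁻¹` only
  -- `closedBall x t⁻¹`.
  have small : ∫⁻ t in Ioc 0 R⁻¹, ν {y | t ≤ ‖y - x‖⁻¹} ≤
      μ (ball 0 1) * ENNReal.ofReal (R ^ (d - 1)) :=
    calc ∫⁻ t in Ioc 0 R⁻¹, ν {y | t ≤ ‖y - x‖⁻¹}
        ≤ ∫⁻ _ in Ioc 0 R⁻¹, μ (ball x R) :=
          lintegral_mono fun t ↦ (measure_mono (subset_univ _)).trans (by simp [ν])
      _ = μ (ball 0 1) * ENNReal.ofReal (R ^ (d - 1)) := by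
          rw [setLIntegral_const, Real.volume_Ioc, sub_zero, μ.addHaar_ball_of_pos x hR, ← hpow,
            ENNReal.ofReal_mul (by positivity)]
          ring
  have large : ∫⁻ t in Ioi R⁻¹, ν {y | t ≤ ‖y - x‖⁻¹} ≤
      μ (ball 0 1) * ENNReal.ofReal (R ^ (d - 1)) :=
    calc ∫⁻ t in Ioi R⁻¹, ν {y | t ≤ ‖y - x‖⁻¹}
        ≤ ∫⁻ t in Ioi R⁻¹, μ (ball 0 1) * ENNReal.ofReal (t⁻¹ ^ d) := by
          refine setLIntegral_mono' measurableSet_Ioi fun t ht ↦ ?_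
          have ht0 : 0 < t := (inv_pos.2 hR).trans ht
          have hsub : {y | t ≤ ‖y - x‖⁻¹} ⊆ closedBall x t⁻¹ := fun y hy ↦ by
            rw [mem_closedBall, dist_eq_norm]
            exact le_inv_of_le_inv₀ ht0 hy
          calc ν {y | t ≤ ‖y - x‖⁻¹} ≤ μ (closedBall x t⁻¹) :=
                Measure.restrict_le_self _ |>.trans (measure_mono hsub)
            _ = _ := by rw [μ.addHaar_closedBall x (inv_nonneg.2 ht0.le), mul_comm]
      _ ≤ μ (ball 0 1) * ENNReal.ofReal (R ^ (d - 1)) := by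
          rw [lintegral_const_mul' _ _ measure_ball_lt_top.ne]
          gcongr
          simpa using lintegral_Ioi_inv_pow_le hd (inv_pos.2 hR)
  rw [lintegral_eq_lintegral_meas_le ν (.of_forall fun _ ↦ by positivity) (by fun_prop),
    ← Ioc_union_Ioi_eq_Ioi (inv_pos.2 hR).le]
  calc _ ≤ _ := lintegral_union_le _ _ _
    _ ≤ _ := add_le_add small large
    _ = _ := by
      rw [ENNReal.ofReal_mul (by positivity), ENNReal.ofReal_mul zero_le_two, ofReal_ofNat,
        ofReal_measureReal measure_ball_lt_top.ne]
      ring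

lemma setLIntegral_ball_rpow_neg_div_norm_sub_le (hd : 2 ≤ finrank ℝ E) {γ : ℝ}
    (hγ : finrank ℝ E ≤ γ) (x : E) :
    ∫⁻ y in ball x ((1 + ‖x‖) / 2), ENNReal.ofReal ((1 + ‖y‖) ^ (-γ) / ‖y - x‖) ∂μ ≤
      ENNReal.ofReal (2 ^ (γ + 1) * μ.real (ball 0 1) * (1 + ‖x‖)⁻¹) := by
  set d := finrank ℝ E
  set m := μ.real (ball 0 1)
  set r := 1 + ‖x‖
  have hr : 1 ≤ r := le_add_of_nonneg_right (norm_nonneg x)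
  have hr0 : 0 < r := zero_lt_one.trans_le hr
  have hγ0 : 0 ≤ γ := (Nat.cast_nonneg d).trans hγ
  have hdecay : r ^ (-γ) * r ^ (d - 1) ≤ r⁻¹ := by
    rw [← Real.rpow_natCast, ← Real.rpow_add hr0, ← Real.rpow_neg_one]
    refine Real.rpow_le_rpow_of_exponent_le hr ?_
    rw [Nat.cast_sub (by omega)]
    push_cast
    linarith
  calc ∫⁻ y in ball x (r / 2), ENNReal.ofReal ((1 + ‖y‖) ^ (-γ) / ‖y - x‖) ∂μ
      ≤ ∫⁻ y in ball x (r / 2), ENNReal.ofReal ((r / 2) ^ (-γ)) * ENNReal.ofReal ‖y - x‖⁻¹ ∂μ := by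
        refine setLIntegral_mono' measurableSet_ball fun y hy ↦ ?_
        rw [← ENNReal.ofReal_mul (by positivity)]
        refine ENNReal.ofReal_le_ofReal ((div_eq_mul_inv _ _).trans_le ?_)
        exact mul_le_mul_of_nonneg_right (Real.rpow_le_rpow_of_nonpos (by positivity)
          (one_add_norm_div_two_le_of_mem_ball hy) (neg_nonpos.2 hγ0)) (by positivity)
    _ ≤ ENNReal.ofReal ((r / 2) ^ (-γ)) * ENNReal.ofReal (2 * m * (r / 2) ^ (d - 1)) := by
        rw [lintegral_const_mul' _ _ ofReal_ne_top]
        gcongr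
        exact lintegral_ball_inv_norm_sub_le μ hd x (by positivity)
    _ ≤ ENNReal.ofReal (2 ^ (γ + 1) * m * r⁻¹) := by
        rw [← ENNReal.ofReal_mul (by positivity)]
        refine ENNReal.ofReal_le_ofReal ?_
        calc (r / 2) ^ (-γ) * (2 * m * (r / 2) ^ (d - 1))
            ≤ 2 ^ γ * r ^ (-γ) * (2 * m * r ^ (d - 1)) := by
              rw [Real.div_rpow hr0.le zero_le_two, Real.rpow_neg zero_le_two,
                div_inv_eq_mul, mul_comm (r ^ (-γ))]
              gcongr
              linarith
          _ = 2 ^ (γ + 1) * m * (r ^ (-γ) * r ^ (d - 1)) := by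
              rw [Real.rpow_add_one two_ne_zero]
              ring
          _ ≤ 2 ^ (γ + 1) * m * r⁻¹ := by gcongr

theorem exists_lintegral_one_add_norm_rpow_neg_div_norm_sub_le (hd : 2 ≤ finrank ℝ E) {γ : ℝ}
    (hγ : finrank ℝ E < γ) :
    ∃ K : ℝ, 0 < K ∧ ∀ x : E,
      ∫⁻ y, ENNReal.ofReal ((1 + ‖y‖) ^ (-γ) / ‖y - x‖) ∂μ ≤ ENNReal.ofReal (K * (1 + ‖x‖)⁻¹) := by
  set I := (∫⁻ y, ENNReal.ofReal ((1 + ‖y‖) ^ (-γ)) ∂μ).toReal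
  have hI : ∫⁻ y, ENNReal.ofReal ((1 + ‖y‖) ^ (-γ)) ∂μ = ENNReal.ofReal I :=
    (ofReal_toReal (finite_integral_one_add_norm hγ).ne).symm
  have hI0 : 0 ≤ I := ENNReal.toReal_nonneg
  have hm : 0 < μ.real (ball 0 1) :=
    ENNReal.toReal_pos (measure_ball_pos μ 0 one_pos).ne' measure_ball_lt_top.ne
  refine ⟨2 ^ (γ + 1) * μ.real (ball 0 1) + 2 * I, by positivity, fun x ↦ ?_⟩
  rw [← lintegral_add_compl _ (measurableSet_ball (x := x) (ε := (1 + ‖x‖) / 2))]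
  calc _ ≤ ENNReal.ofReal (2 ^ (γ + 1) * μ.real (ball 0 1) * (1 + ‖x‖)⁻¹) +
        ENNReal.ofReal I * ENNReal.ofReal ((1 + ‖x‖) / 2)⁻¹ := by
        rw [← hI]
        exact add_le_add (setLIntegral_ball_rpow_neg_div_norm_sub_le μ hd hγ.le x)
          (setLIntegral_compl_ball_div_norm_sub_le μ (fun _ ↦ by positivity) x (by positivity))
    _ = _ := by
        rw [← ENNReal.ofReal_mul hI0, ← ENNReal.ofReal_add (by positivity) (by positivity), inv_div]
        congr 1
        ring

theorem exists_chainLIntegral_rpow_neg_div_norm_sub_le (hd : 2 ≤ finrank ℝ E) {γ : ℝ}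
    (hγ : finrank ℝ E < γ) {A : ℝ} (hA : 0 < A) :
    ∃ D : ℝ, 0 < D ∧ ∀ (n : ℕ) (x : E),
      chainLIntegral μ (fun a b ↦ ENNReal.ofReal (A * (1 + ‖a‖) ^ (-γ) / ‖a - b‖)) (n + 1) x ≤
        ENNReal.ofReal (D ^ (n + 1) * (1 + ‖x‖)⁻¹) := by
  obtain ⟨K, hK, hconv⟩ := exists_lintegral_one_add_norm_rpow_neg_div_norm_sub_le μ hd hγ
  refine ⟨A * K, by positivity, fun n x ↦ ?_⟩
  have hstep : ∀ x : E, ∫⁻ a, ENNReal.ofReal (A * (1 + ‖a‖) ^ (-γ) / ‖a - x‖) ∂μ ≤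
      ENNReal.ofReal (A * K) * ENNReal.ofReal (1 + ‖x‖)⁻¹ := fun x ↦ by
    simp only [mul_div_assoc, ENNReal.ofReal_mul hA.le]
    rw [lintegral_const_mul' _ _ ofReal_ne_top, mul_assoc, ← ENNReal.ofReal_mul hK.le]
    gcongr
    exact hconv x
  have hw : ∀ x : E, ENNReal.ofReal (1 + ‖x‖)⁻¹ ≤ 1 := fun x ↦
    ENNReal.ofReal_le_one.2 (inv_le_one_of_one_le₀ (le_add_of_nonneg_right (norm_nonneg x)))
  rw [ENNReal.ofReal_mul (by positivity), ENNReal.ofReal_pow (by positivity)]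
  exact chainLIntegral_succ_le (by fun_prop) hstep hw n x

end AddHaar

/-- Iterated convolution bound: if `|v(y)| ≤ C ⟨y⟩^{-β}` with `β > 3`, then there is `C'`
such that for every `n ≥ 1` and `x ∈ ℝ³`,
`∫_{ℝ^{3n}} (∏ |v(y_j)|) / (∏ |y_j - y_{j-1}|) dy ≤ (C')^n ⟨x⟩^{-1}`, with `y_0 = x`. -/
theorem stmt_4 (v : EuclideanSpace ℝ (Fin 3) → ℝ) (C β : ℝ) (hC : 0 < C) (hβ : 3 < β)
    (hbd : ∀ y, |v y| ≤ C * (1 + ‖y‖ ^ 2) ^ (-(β / 2))) :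
    ∃ C' : ℝ, 0 < C' ∧ ∀ n : ℕ, 1 ≤ n → ∀ x : EuclideanSpace ℝ (Fin 3),
      (∫ y : Fin n → EuclideanSpace ℝ (Fin 3),
          (∏ j : Fin n, |v (y j)|) /
            ∏ j : Fin n,
              ‖y j - Fin.cases (motive := fun _ => EuclideanSpace ℝ (Fin 3)) x y j.castSucc‖)
        ≤ C' ^ n * (1 + ‖x‖ ^ 2) ^ (-(1 / 2 : ℝ)) := by
  have hv : ∀ y, ‖|v y|‖ ≤ C * 2 ^ (β / 2) * (1 + ‖y‖) ^ (-β) := fun y ↦ by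
    rw [Real.norm_eq_abs, abs_abs, mul_assoc]
    refine (hbd y).trans (mul_le_mul_of_nonneg_left ?_ hC.le)
    simpa only [neg_div] using rpow_neg_one_add_norm_sq_le y (by linarith : 0 < β)
  obtain ⟨D, hD, hchain⟩ := exists_chainLIntegral_rpow_neg_div_norm_sub_le
    (volume : Measure (EuclideanSpace ℝ (Fin 3))) (by simp) (γ := β) (by simpa using hβ)
    (A := C * 2 ^ (β / 2)) (by positivity)
  refine ⟨D, hD, fun n hn x ↦ ?_⟩
  obtain ⟨n, rfl⟩ := Nat.exists_eq_add_of_le' hn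
  calc _ ≤ D ^ (n + 1) * (1 + ‖x‖)⁻¹ :=
        integral_le_of_chainLIntegral_le (fun y ↦ ofReal_norm_prod_div_prod_le _
          (fun j _ ↦ hv (y j)) (fun j _ ↦ norm_nonneg _)) (by positivity) (hchain n x)
    _ ≤ D ^ (n + 1) * (1 + ‖x‖ ^ 2) ^ (-(1 / 2 : ℝ)) := by
        gcongr
        exact inv_one_add_norm_le_rpow_neg_one_add_norm_sq x
end

section
/- Let T be a nonnegative injective self-adjoint operator on a Hilbert space h, f ∈ D(T^{-1/2}), and Ψ ∈ D(dΓ(T)^{1/2}) in the bosonic Fock space over h. Then Ψ ∈ D(a(f)) and ‖a(f)Ψ‖ ≤ ‖T^{-1/2} f‖ · ‖dΓ(T)^{1/2} Ψ‖. -/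
/-!
Fix `ks` and apply Cauchy–Schwarz with weight `ω` to `∫ f(x) Φₙ₊₁(x, ks) dx`, splitting the
integrand as `(f ω^{-1/2}) (ω^{1/2} Φₙ₊₁)`: the `n`-particle sector of `a(f)Ψ` has squared norm
at most `(n + 1) ‖ω^{-1/2} f‖² ∫ ω(k₀) |Φₙ₊₁(k)|² dk`. Since `Φₙ₊₁` is symmetric, each of the
`n + 1` terms of `∑ᵢ ω(kᵢ)` contributes the same integral, so the factor `n + 1` turns this into
`‖ω^{-1/2} f‖² ∫ (∑ᵢ ω(kᵢ)) |Φₙ₊₁(k)|² dk`, the `(n + 1)`-particle part of `‖dΓ(T)^{1/2}Ψ‖²`.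
Summing over `n` gives the bound.
-/

open MeasureTheory

/-- The annihilation operator on the concrete bosonic Fock space over `L²(α, μ)`:
`(a(f)Φ)^{(n)}(k₁,…,kₙ) = √(n+1) ∫ f(k) Φ^{(n+1)}(k,k₁,…,kₙ) dμ(k)`. -/
noncomputable def fockAnn {α : Type*} [MeasurableSpace α] (μ : Measure α)
    (f : α → ℂ) (Φ : ∀ n : ℕ, (Fin n → α) → ℂ) (n : ℕ) (ks : Fin n → α) : ℂ :=
  (Real.sqrt (n + 1) : ℂ) * ∫ x, f x * Φ (n + 1) (Fin.cons x ks) ∂μ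

open scoped ENNReal

namespace MeasureTheory

variable {α : Type*} [MeasurableSpace α] {μ : Measure α}

theorem lintegral_mul_sq_le {f g : α → ℝ≥0∞} (hf : AEMeasurable f μ) (hg : AEMeasurable g μ) :
    (∫⁻ x, f x * g x ∂μ) ^ 2 ≤ (∫⁻ x, f x ^ 2 ∂μ) * ∫⁻ x, g x ^ 2 ∂μ := by
  have h := ENNReal.lintegral_mul_le_Lp_mul_Lq μ Real.HolderConjugate.two_two hf hg
  simp only [ENNReal.rpow_two, Pi.mul_apply] at h
  calc (∫⁻ x, f x * g x ∂μ) ^ 2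
      ≤ ((∫⁻ x, f x ^ 2 ∂μ) ^ (1 / 2 : ℝ) * (∫⁻ x, g x ^ 2 ∂μ) ^ (1 / 2 : ℝ)) ^ 2 := by gcongr
    _ = (∫⁻ x, f x ^ 2 ∂μ) * ∫⁻ x, g x ^ 2 ∂μ := by
      rw [mul_pow, ← ENNReal.rpow_two, ← ENNReal.rpow_two, ← ENNReal.rpow_mul,
        ← ENNReal.rpow_mul]
      norm_num

theorem lintegral_mul_sq_le_weighted {f g w : α → ℝ≥0∞} (hf : AEMeasurable f μ)
    (hg : AEMeasurable g μ) (hw : AEMeasurable w μ) (hw0 : ∀ᵐ x ∂μ, w x ≠ 0)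
    (hwtop : ∀ᵐ x ∂μ, w x ≠ ∞) :
    (∫⁻ x, f x * g x ∂μ) ^ 2 ≤ (∫⁻ x, f x ^ 2 / w x ∂μ) * ∫⁻ x, w x * g x ^ 2 ∂μ := by
  set s : α → ℝ≥0∞ := fun x => w x ^ (1 / 2 : ℝ)
  have hs_sq : ∀ x, s x ^ 2 = w x := fun x => by
    rw [← ENNReal.rpow_two, ← ENNReal.rpow_mul]; norm_num
  have hfg : ∀ᵐ x ∂μ, f x * g x = f x / s x * (s x * g x) := by
    filter_upwards [hw0, hwtop] with x h0 htop
    have hs0 : s x ≠ 0 := (ENNReal.rpow_pos (pos_iff_ne_zero.2 h0) htop).ne'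
    rw [← mul_assoc, ENNReal.div_mul_cancel hs0 (ENNReal.rpow_ne_top_of_ne_zero h0 htop)]
  calc (∫⁻ x, f x * g x ∂μ) ^ 2 = (∫⁻ x, f x / s x * (s x * g x) ∂μ) ^ 2 := by
        rw [lintegral_congr_ae hfg]
    _ ≤ (∫⁻ x, (f x / s x) ^ 2 ∂μ) * ∫⁻ x, (s x * g x) ^ 2 ∂μ :=
        lintegral_mul_sq_le (hf.div (hw.pow_const _)) ((hw.pow_const _).mul hg)
    _ = (∫⁻ x, f x ^ 2 / w x ∂μ) * ∫⁻ x, w x * g x ^ 2 ∂μ := by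
        simp only [div_eq_mul_inv, mul_pow, ← ENNReal.inv_pow, hs_sq]

theorem lintegral_comp_perm [SigmaFinite μ] {ι : Type*} [Fintype ι] {G : (ι → α) → ℝ≥0∞}
    (σ : Equiv.Perm ι) :
    ∫⁻ k, G (k ∘ σ) ∂(Measure.pi fun _ : ι => μ) = ∫⁻ k, G k ∂(Measure.pi fun _ : ι => μ) :=
  (measurePreserving_arrowCongr' (fun _ => μ) (fun _ => μ) σ.symm (MeasurableEquiv.refl α)
    fun _ => MeasurePreserving.id μ).lintegral_comp_emb (MeasurableEquiv.measurableEmbedding _) G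

theorem measurable_fin_cons {n : ℕ} :
    Measurable fun p : α × (Fin n → α) => (Fin.cons p.1 p.2 : Fin (n + 1) → α) := by
  refine measurable_pi_iff.2 fun i => ?_
  cases i using Fin.cases <;> simp only [Fin.cons_zero, Fin.cons_succ] <;> fun_prop

theorem lintegral_lintegral_fin_cons [SigmaFinite μ] {n : ℕ} {G : (Fin (n + 1) → α) → ℝ≥0∞}
    (hG : Measurable G) :
    ∫⁻ ks, ∫⁻ x, G (Fin.cons x ks) ∂μ ∂(Measure.pi fun _ : Fin n => μ)
      = ∫⁻ k, G k ∂(Measure.pi fun _ : Fin (n + 1) => μ) := by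
  rw [← ((measurePreserving_piFinSuccAbove (fun _ : Fin (n + 1) => μ) 0).symm _).lintegral_comp_emb
    (MeasurableEquiv.measurableEmbedding _), lintegral_prod_symm]
  · simp [Fin.insertNthEquiv, Fin.insertNth_zero']
  · exact (hG.comp (MeasurableEquiv.measurable _)).aemeasurable

theorem lintegral_sum_mul_of_comp_perm_eq [SigmaFinite μ] {ι : Type*} [Fintype ι] [DecidableEq ι]
    {w : α → ℝ≥0∞} (hw : Measurable w) {G : (ι → α) → ℝ≥0∞} (hG : Measurable G)
    (hsym : ∀ (σ : Equiv.Perm ι) k, G (k ∘ σ) = G k) (i₀ : ι) :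
    ∫⁻ k, (∑ i, w (k i)) * G k ∂(Measure.pi fun _ : ι => μ)
      = Fintype.card ι * ∫⁻ k, w (k i₀) * G k ∂(Measure.pi fun _ : ι => μ) := by
  have hterm : ∀ i, ∫⁻ k, w (k i) * G k ∂(Measure.pi fun _ : ι => μ)
      = ∫⁻ k, w (k i₀) * G k ∂(Measure.pi fun _ : ι => μ) := fun i => by
    rw [← lintegral_comp_perm (G := fun k => w (k i₀) * G k) (Equiv.swap i₀ i)]
    simp [hsym]
  simp_rw [Finset.sum_mul]
  rw [lintegral_finsetSum (f := fun i k => w (k i) * G k) _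
    fun i _ => (hw.comp (measurable_pi_apply i)).mul hG]
  simp [hterm]

theorem ae_forall_pi [SigmaFinite μ] {ι : Type*} [Fintype ι] {p : α → Prop} (h : ∀ᵐ x ∂μ, p x) :
    ∀ᵐ k ∂(Measure.pi fun _ : ι => μ), ∀ i, p (k i) :=
  ae_all_iff.2 fun _ => Measure.tendsto_eval_ae_ae.eventually h

theorem enorm_integral_mul_sq_le {𝕜 : Type*} [RCLike 𝕜] {f g : α → 𝕜} {w : α → ℝ≥0∞}
    (hf : AEStronglyMeasurable f μ) (hg : AEStronglyMeasurable g μ) (hw : AEMeasurable w μ)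
    (hw0 : ∀ᵐ x ∂μ, w x ≠ 0) (hwtop : ∀ᵐ x ∂μ, w x ≠ ∞) :
    ‖∫ x, f x * g x ∂μ‖ₑ ^ 2 ≤ (∫⁻ x, ‖f x‖ₑ ^ 2 / w x ∂μ) * ∫⁻ x, w x * ‖g x‖ₑ ^ 2 ∂μ := by
  calc ‖∫ x, f x * g x ∂μ‖ₑ ^ 2 ≤ (∫⁻ x, ‖f x‖ₑ * ‖g x‖ₑ ∂μ) ^ 2 := by
        simp_rw [← enorm_mul]; gcongr; exact enorm_integral_le_lintegral_enorm _
    _ ≤ _ := lintegral_mul_sq_le_weighted hf.enorm hg.enorm hw hw0 hwtop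

end MeasureTheory

section Fock

variable {α : Type*} [MeasurableSpace α] {μ : Measure α}

theorem enorm_fockAnn_sq (f : α → ℂ) (Φ : ∀ n : ℕ, (Fin n → α) → ℂ) (n : ℕ) (ks : Fin n → α) :
    ‖fockAnn μ f Φ n ks‖ₑ ^ 2 = (n + 1) * ‖∫ x, f x * Φ (n + 1) (Fin.cons x ks) ∂μ‖ₑ ^ 2 := by
  rw [fockAnn, enorm_mul, mul_pow, ← ofReal_norm, ← ENNReal.ofReal_pow (norm_nonneg _),
    Complex.norm_real, Real.norm_of_nonneg (Real.sqrt_nonneg _), Real.sq_sqrt (by positivity)]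
  norm_cast

theorem measurable_fockAnn [SFinite μ] {f : α → ℂ} (hf : Measurable f)
    {Φ : ∀ n : ℕ, (Fin n → α) → ℂ} {n : ℕ} (hΦ : Measurable (Φ (n + 1))) :
    Measurable (fockAnn μ f Φ n) := by
  have hF : StronglyMeasurable fun p : (Fin n → α) × α =>
      f p.2 * Φ (n + 1) (Fin.cons p.2 p.1) :=
    ((hf.comp measurable_snd).mul
      (hΦ.comp (measurable_fin_cons.comp measurable_swap))).stronglyMeasurable
  exact measurable_const.mul hF.integral_prod_right'.measurable

theorem lintegral_enorm_fockAnn_sq_le [SigmaFinite μ] {w : α → ℝ≥0∞} (hw : Measurable w)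
    (hw0 : ∀ᵐ x ∂μ, w x ≠ 0) (hwtop : ∀ᵐ x ∂μ, w x ≠ ∞) {f : α → ℂ} (hf : Measurable f)
    {Φ : ∀ n : ℕ, (Fin n → α) → ℂ} {n : ℕ} (hΦ : Measurable (Φ (n + 1)))
    (hΦsym : ∀ (σ : Equiv.Perm (Fin (n + 1))) k, Φ (n + 1) (k ∘ σ) = Φ (n + 1) k) :
    ∫⁻ ks, ‖fockAnn μ f Φ n ks‖ₑ ^ 2 ∂(Measure.pi fun _ : Fin n => μ)
      ≤ (∫⁻ x, ‖f x‖ₑ ^ 2 / w x ∂μ) *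
        ∫⁻ k, (∑ i, w (k i)) * ‖Φ (n + 1) k‖ₑ ^ 2 ∂(Measure.pi fun _ : Fin (n + 1) => μ) := by
  set C := ∫⁻ x, ‖f x‖ₑ ^ 2 / w x ∂μ
  set G : (Fin (n + 1) → α) → ℝ≥0∞ := fun k => w (k 0) * ‖Φ (n + 1) k‖ₑ ^ 2
  have hG : Measurable G := (hw.comp (measurable_pi_apply 0)).mul (hΦ.enorm.pow_const 2)
  have hCS : ∀ ks : Fin n → α, ‖∫ x, f x * Φ (n + 1) (Fin.cons x ks) ∂μ‖ₑ ^ 2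
      ≤ C * ∫⁻ x, G (Fin.cons x ks) ∂μ := fun ks => by
    have hslice : Measurable fun x => Φ (n + 1) (Fin.cons x ks) :=
      hΦ.comp (measurable_fin_cons.comp (measurable_id.prodMk measurable_const))
    simpa [G] using enorm_integral_mul_sq_le hf.aestronglyMeasurable
      hslice.aestronglyMeasurable hw.aemeasurable hw0 hwtop
  calc ∫⁻ ks, ‖fockAnn μ f Φ n ks‖ₑ ^ 2 ∂(Measure.pi fun _ : Fin n => μ)
      ≤ ∫⁻ ks, (n + 1) * (C * ∫⁻ x, G (Fin.cons x ks) ∂μ) ∂(Measure.pi fun _ : Fin n => μ) := by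
        simp_rw [enorm_fockAnn_sq]
        gcongr with ks
        exact hCS ks
    _ = (n + 1) * C * ∫⁻ k, G k ∂(Measure.pi fun _ : Fin (n + 1) => μ) := by
        simp_rw [← mul_assoc]
        rw [← lintegral_lintegral_fin_cons hG]
        exact lintegral_const_mul _ (hG.comp measurable_fin_cons).lintegral_prod_left'
    _ = C * ∫⁻ k, (∑ i, w (k i)) * ‖Φ (n + 1) k‖ₑ ^ 2 ∂(Measure.pi fun _ : Fin (n + 1) => μ) := by
        rw [lintegral_sum_mul_of_comp_perm_eq hw (hΦ.enorm.pow_const 2)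
          (fun σ k => by rw [hΦsym]) 0]
        simp [G]
        ring

theorem integral_norm_fockAnn_sq_le [SigmaFinite μ] {ω : α → ℝ} (hωm : Measurable ω)
    (hωpos : ∀ᵐ x ∂μ, 0 < ω x) {f : α → ℂ} (hfm : Measurable f)
    (hfdom : Integrable (fun x => ‖f x‖ ^ 2 / ω x) μ) {Φ : ∀ n : ℕ, (Fin n → α) → ℂ} {n : ℕ}
    (hΦm : Measurable (Φ (n + 1)))
    (hΦsym : ∀ (σ : Equiv.Perm (Fin (n + 1))) k, Φ (n + 1) (k ∘ σ) = Φ (n + 1) k)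
    (hΦdom : Integrable (fun k : Fin (n + 1) → α => (∑ i, ω (k i)) * ‖Φ (n + 1) k‖ ^ 2)
      (Measure.pi fun _ : Fin (n + 1) => μ)) :
    ∫ ks, ‖fockAnn μ f Φ n ks‖ ^ 2 ∂(Measure.pi fun _ : Fin n => μ)
      ≤ (∫ x, ‖f x‖ ^ 2 / ω x ∂μ) *
        ∫ k, (∑ i, ω (k i)) * ‖Φ (n + 1) k‖ ^ 2 ∂(Measure.pi fun _ : Fin (n + 1) => μ) := by
  have hωpos_pi := ae_forall_pi (ι := Fin (n + 1)) hωpos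
  have key := lintegral_enorm_fockAnn_sq_le (w := fun x => ENNReal.ofReal (ω x))
    (ENNReal.measurable_ofReal.comp hωm)
    (hωpos.mono fun x hx => (ENNReal.ofReal_pos.2 hx).ne')
    (ae_of_all _ fun _ => ENNReal.ofReal_ne_top) hfm hΦm hΦsym
  have hC : ∫⁻ x, ‖f x‖ₑ ^ 2 / ENNReal.ofReal (ω x) ∂μ
      = ∫⁻ x, ENNReal.ofReal (‖f x‖ ^ 2 / ω x) ∂μ := by
    refine lintegral_congr_ae (hωpos.mono fun x hx => ?_)
    dsimp only
    rw [ENNReal.ofReal_div_of_pos hx, ENNReal.ofReal_pow (norm_nonneg _), ofReal_norm]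
  have hB : ∫⁻ k, (∑ i, ENNReal.ofReal (ω (k i))) * ‖Φ (n + 1) k‖ₑ ^ 2
        ∂(Measure.pi fun _ : Fin (n + 1) => μ)
      = ∫⁻ k, ENNReal.ofReal ((∑ i, ω (k i)) * ‖Φ (n + 1) k‖ ^ 2)
        ∂(Measure.pi fun _ : Fin (n + 1) => μ) := by
    refine lintegral_congr_ae (hωpos_pi.mono fun k hk => ?_)
    dsimp only
    rw [ENNReal.ofReal_mul (Finset.sum_nonneg fun i _ => (hk i).le),
      ENNReal.ofReal_sum_of_nonneg fun i _ => (hk i).le, ENNReal.ofReal_pow (norm_nonneg _),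
      ofReal_norm]
  simp_rw [hC, hB, ← ofReal_norm, ← ENNReal.ofReal_pow (norm_nonneg _)] at key
  rw [integral_eq_lintegral_of_nonneg_ae (ae_of_all _ fun _ => by positivity)
      ((measurable_fockAnn hfm hΦm).norm.pow_const 2).aestronglyMeasurable,
    integral_eq_lintegral_of_nonneg_ae (hωpos.mono fun x hx => by positivity)
      hfdom.aestronglyMeasurable,
    integral_eq_lintegral_of_nonneg_ae (hωpos_pi.mono fun k hk => by
        have := Finset.sum_nonneg fun i (_ : i ∈ Finset.univ) => (hk i).le
        positivity)
      hΦdom.aestronglyMeasurable, ← ENNReal.toReal_mul]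
  exact ENNReal.toReal_mono
    (ENNReal.mul_ne_top hfdom.lintegral_lt_top.ne hΦdom.lintegral_lt_top.ne) key

end Fock

/-- `T` is multiplication by `ω` on `L²(α, μ)`, so `‖T^{-1/2} f‖² = ∫ ‖f‖² / ω` and
`‖dΓ(T)^{1/2} Ψ‖² = ∑ₙ ∫ (∑ᵢ ω(kᵢ)) ‖Φₙ(k)‖²`; the bound is stated for the squared norms. -/
theorem stmt_8_general {α : Type*} [MeasurableSpace α] (μ : Measure α) [SigmaFinite μ]
    (ω : α → ℝ) (hωm : Measurable ω) (hωpos : ∀ᵐ x ∂μ, 0 < ω x)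
    (f : α → ℂ) (hfm : Measurable f)
    (hfdom : Integrable (fun x => ‖f x‖ ^ 2 / ω x) μ)
    (Φ : ∀ n : ℕ, (Fin n → α) → ℂ)
    (hΦm : ∀ n, Measurable (Φ n))
    (hΦsym : ∀ n (σ : Equiv.Perm (Fin n)) (k : Fin n → α), Φ n (k ∘ σ) = Φ n k)
    (hΦdom : ∀ n, Integrable
        (fun k : Fin n → α => (∑ i, ω (k i)) * ‖Φ n k‖ ^ 2)
        (Measure.pi fun _ : Fin n => μ))
    (hΦdom' : Summable fun n : ℕ =>
        ∫ k : Fin n → α, (∑ i, ω (k i)) * ‖Φ n k‖ ^ 2 ∂(Measure.pi fun _ : Fin n => μ)) :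
    (Summable fun n : ℕ =>
        ∫ k : Fin n → α, ‖fockAnn μ f Φ n k‖ ^ 2 ∂(Measure.pi fun _ : Fin n => μ)) ∧
    (∑' n : ℕ, ∫ k : Fin n → α, ‖fockAnn μ f Φ n k‖ ^ 2 ∂(Measure.pi fun _ : Fin n => μ))
      ≤ (∫ x, ‖f x‖ ^ 2 / ω x ∂μ) *
        ∑' n : ℕ, ∫ k : Fin n → α, (∑ i, ω (k i)) * ‖Φ n k‖ ^ 2
          ∂(Measure.pi fun _ : Fin n => μ) := by
  set c := ∫ x, ‖f x‖ ^ 2 / ω x ∂μ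
  set b : ℕ → ℝ := fun n =>
    ∫ k : Fin n → α, (∑ i, ω (k i)) * ‖Φ n k‖ ^ 2 ∂(Measure.pi fun _ : Fin n => μ)
  have hsector n := integral_norm_fockAnn_sq_le hωm hωpos hfm hfdom (hΦm (n + 1))
    (hΦsym (n + 1)) (hΦdom (n + 1))
  have hb_nonneg : 0 ≤ b 0 := integral_nonneg fun k => by simp
  have hb_shift : Summable fun n => c * b (n + 1) :=
    ((summable_nat_add_iff 1).2 hΦdom').mul_left c
  have hsum := Summable.of_nonneg_of_le (fun n => integral_nonneg fun _ => by positivity)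
    hsector hb_shift
  refine ⟨hsum, ?_⟩
  calc _ ≤ ∑' n, c * b (n + 1) := hsum.tsum_le_tsum hsector hb_shift
    _ = c * ∑' n, b (n + 1) := tsum_mul_left
    _ ≤ c * ∑' n, b n := by
        rw [hΦdom'.tsum_eq_zero_add]
        gcongr
        · exact integral_nonneg_of_ae (hωpos.mono fun x hx => by positivity)
        · linarith

/-- If `T` is the (nonnegative, injective, self-adjoint) operator of multiplication by
`ω > 0` a.e. on `L²(α,μ)`, `f ∈ D(T^{-1/2})` and `Ψ ∈ D(dΓ(T)^{1/2})`, then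
`Ψ ∈ D(a(f))` (the squared sector norms of `a(f)Ψ` are summable) and
`‖a(f)Ψ‖² ≤ ‖T^{-1/2}f‖² ‖dΓ(T)^{1/2}Ψ‖²`. -/
theorem stmt_8 {α : Type*} [MeasurableSpace α] (μ : Measure α) [SigmaFinite μ]
    (ω : α → ℝ) (hωm : Measurable ω) (hωpos : ∀ᵐ x ∂μ, 0 < ω x)
    (f : α → ℂ) (hfm : Measurable f)
    (hfdom : Integrable (fun x => ‖f x‖ ^ 2 / ω x) μ)
    (Φ : ∀ n : ℕ, (Fin n → α) → ℂ)
    (hΦm : ∀ n, Measurable (Φ n))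
    (hΦsym : ∀ n (σ : Equiv.Perm (Fin n)) (k : Fin n → α), Φ n (k ∘ σ) = Φ n k)
    (hΦL2 : ∀ n, Integrable (fun k : Fin n → α => ‖Φ n k‖ ^ 2)
        (Measure.pi fun _ : Fin n => μ))
    (hΦfock : Summable fun n : ℕ =>
        ∫ k : Fin n → α, ‖Φ n k‖ ^ 2 ∂(Measure.pi fun _ : Fin n => μ))
    (hΦdom : ∀ n, Integrable
        (fun k : Fin n → α => (∑ i, ω (k i)) * ‖Φ n k‖ ^ 2)
        (Measure.pi fun _ : Fin n => μ))
    (hΦdom' : Summable fun n : ℕ =>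
        ∫ k : Fin n → α, (∑ i, ω (k i)) * ‖Φ n k‖ ^ 2 ∂(Measure.pi fun _ : Fin n => μ)) :
    (Summable fun n : ℕ =>
        ∫ k : Fin n → α, ‖fockAnn μ f Φ n k‖ ^ 2 ∂(Measure.pi fun _ : Fin n => μ)) ∧
    (∑' n : ℕ, ∫ k : Fin n → α, ‖fockAnn μ f Φ n k‖ ^ 2 ∂(Measure.pi fun _ : Fin n => μ))
      ≤ (∫ x, ‖f x‖ ^ 2 / ω x ∂μ) *
        ∑' n : ℕ, ∫ k : Fin n → α, (∑ i, ω (k i)) * ‖Φ n k‖ ^ 2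
          ∂(Measure.pi fun _ : Fin n => μ) :=
  stmt_8_general μ ω hωm hωpos f hfm hfdom Φ hΦm hΦsym hΦdom hΦdom'
end

section
/- On the finite-particle subspace of the bosonic Fock space, for f, g in the one-particle Hilbert space, the canonical commutation relations hold: [a(f), a(g)] = 0, [a†(f), a†(g)] = 0, and [a(f), a†(g)] = ⟨\bar f, g⟩ · 1. -/
open MeasureTheory

/-- Creation operator `(a†(f)Φ)^{(n)} = √n Sₙ(f ⊗ Φ^{(n-1)})`. -/
noncomputable def fockCre {α : Type*} (f : α → ℂ)
    (Φ : ∀ n : ℕ, (Fin n → α) → ℂ) : ∀ n : ℕ, (Fin n → α) → ℂ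
  | 0, _ => 0
  | (m + 1), k =>
      ((Real.sqrt (m + 1) / (Nat.factorial (m + 1)) : ℝ) : ℂ) *
        ∑ σ : Equiv.Perm (Fin (m + 1)), f (k (σ 0)) * Φ m fun i => k (σ i.succ)

/-!
For symmetric `Φ` the symmetrisation in `a†(g)` collapses to
`(a†(g)Φ)(k₀, …, kₙ) = (n + 1)^{-1/2} ∑ₚ g(kₚ) Φ(k without kₚ)`. Inserting this into
`a(f)a†(g)Φ`, the summand where the integration variable `x` sits in the slot of `g` gives
`(∫ f g) Φ`, and the remaining summands are exactly `a†(g)a(f)Φ`.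
The annihilators commute by Fubini, since `Φ` is symmetric in its first two arguments.
The creators commute for every `Φ`: `a†(f)a†(g)Φ` is a multiple of the sum over all
permutations `ρ` of `f(k_{ρ 0}) g(k_{ρ 1}) Φ(k_{ρ 2}, …)`, and composing `ρ` with the
transposition `(0 1)` exchanges `f` and `g`.
-/

section Tuples

variable {α β : Type*}

lemma apply_comp_eq_of_range_eq {m N : ℕ} {Ψ : (Fin m → α) → β}
    (hΨ : ∀ (σ : Equiv.Perm (Fin m)) (k : Fin m → α), Ψ (k ∘ σ) = Ψ k) (k : Fin N → α)
    {e e' : Fin m → Fin N} (he : Function.Injective e) (he' : Function.Injective e')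
    (h : Set.range e = Set.range e') : Ψ (k ∘ e) = Ψ (k ∘ e') := by
  let ρ : Equiv.Perm (Fin m) := (Equiv.ofInjective e' he').trans
    ((Equiv.setCongr h.symm).trans (Equiv.ofInjective e he).symm)
  have hρ : e' = e ∘ ρ := by
    funext i
    simp only [ρ, Function.comp_apply, Equiv.trans_apply]
    rw [Equiv.apply_ofInjective_symm he]
    rfl
  rw [hρ, ← Function.comp_assoc, hΨ]

lemma cons_comp_perm {n : ℕ} (x : α) (k : Fin n → α) (σ : Equiv.Perm (Fin n)) :
    Fin.cons x (k ∘ σ) = Fin.cons x k ∘ Equiv.Perm.decomposeFin.symm (0, σ) := by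
  ext i
  refine Fin.cases ?_ (fun j => ?_) i <;> simp

lemma removeNth_succ_cons {n : ℕ} (x : α) (k : Fin (n + 1) → α) (j : Fin (n + 1)) :
    Fin.removeNth j.succ (Fin.cons x k : Fin (n + 2) → α) = Fin.cons x (Fin.removeNth j k) :=
  Fin.cons_comp_succ_succAbove x k j

end Tuples

section Annihilation

variable {α : Type*} [MeasurableSpace α] (μ : Measure α)

lemma fockAnn_comp_perm (f : α → ℂ) {Φ : ∀ n : ℕ, (Fin n → α) → ℂ} {n : ℕ}
    (hΦ : ∀ (σ : Equiv.Perm (Fin (n + 1))) (k : Fin (n + 1) → α), Φ (n + 1) (k ∘ σ) = Φ (n + 1) k)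
    (σ : Equiv.Perm (Fin n)) (k : Fin n → α) :
    fockAnn μ f Φ n (k ∘ σ) = fockAnn μ f Φ n k := by
  simp only [fockAnn, cons_comp_perm, hΦ]

lemma fockAnn_fockAnn (f g : α → ℂ) (Φ : ∀ n : ℕ, (Fin n → α) → ℂ) (n : ℕ) (k : Fin n → α) :
    fockAnn μ f (fockAnn μ g Φ) n k =
      (√((n : ℝ) + 1) * √((n : ℝ) + 2) : ℝ) *
        ∫ x, ∫ y, f x * g y * Φ (n + 2) (Fin.cons y (Fin.cons x k)) ∂μ ∂μ := by
  have hconst : (√(((n + 1 : ℕ) : ℝ) + 1) : ℂ) = (√((n : ℝ) + 2) : ℝ) := by push_cast; ring_nf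
  have hx : ∀ x, f x * fockAnn μ g Φ (n + 1) (Fin.cons x k) =
      (√((n : ℝ) + 2) : ℝ) * ∫ y, f x * g y * Φ (n + 2) (Fin.cons y (Fin.cons x k)) ∂μ := by
    intro x
    rw [fockAnn, hconst, mul_left_comm, ← integral_const_mul]
    simp only [mul_assoc]
  rw [fockAnn]
  simp only [hx, integral_const_mul, Complex.ofReal_mul, mul_assoc]

lemma fockAnn_fockAnn_comm [SFinite μ] {f g : α → ℂ} {Φ : ∀ n : ℕ, (Fin n → α) → ℂ} {n : ℕ}
    (hΦ : ∀ (σ : Equiv.Perm (Fin (n + 2))) (k : Fin (n + 2) → α), Φ (n + 2) (k ∘ σ) = Φ (n + 2) k)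
    (k : Fin n → α)
    (hint : Integrable (fun p : α × α =>
      f p.1 * g p.2 * Φ (n + 2) (Fin.cons p.1 (Fin.cons p.2 k))) (μ.prod μ)) :
    fockAnn μ f (fockAnn μ g Φ) n k = fockAnn μ g (fockAnn μ f Φ) n k := by
  have hswap : ∀ x y, Φ (n + 2) (Fin.cons y (Fin.cons x k)) =
      Φ (n + 2) (Fin.cons x (Fin.cons y k)) := fun x y => by
    rw [← hΦ (Equiv.swap 0 1)]
    exact congrArg _ (Matrix.cons_cons_comp_swap_zero_one y x k)
  rw [fockAnn_fockAnn, fockAnn_fockAnn]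
  congr 1
  calc ∫ x, ∫ y, f x * g y * Φ (n + 2) (Fin.cons y (Fin.cons x k)) ∂μ ∂μ
      = ∫ x, ∫ y, f x * g y * Φ (n + 2) (Fin.cons x (Fin.cons y k)) ∂μ ∂μ := by
        simp only [hswap]
    _ = ∫ y, ∫ x, f x * g y * Φ (n + 2) (Fin.cons x (Fin.cons y k)) ∂μ ∂μ :=
        integral_integral_swap hint
    _ = ∫ y, ∫ x, g y * f x * Φ (n + 2) (Fin.cons x (Fin.cons y k)) ∂μ ∂μ := by
        simp only [mul_comm (f _) (g _)]

end Annihilation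

section Creation

variable {α : Type*}

lemma fockCre_succ_eq_sum_removeNth (g : α → ℂ) (Φ : ∀ n : ℕ, (Fin n → α) → ℂ) {m : ℕ}
    (hΦ : ∀ (σ : Equiv.Perm (Fin m)) (k : Fin m → α), Φ m (k ∘ σ) = Φ m k)
    (k : Fin (m + 1) → α) :
    fockCre g Φ (m + 1) k =
      ((√((m : ℝ) + 1) : ℝ) : ℂ)⁻¹ * ∑ p, g (k p) * Φ m (Fin.removeNth p k) := by
  have hterm : ∀ σ : Equiv.Perm (Fin (m + 1)),
      Φ m (fun i => k (σ i.succ)) = Φ m (Fin.removeNth (σ 0) k) := fun σ =>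
    apply_comp_eq_of_range_eq hΦ k (σ.injective.comp (Fin.succ_injective _))
      Fin.succAbove_right_injective (by
        change Set.range (σ ∘ Fin.succ) = _
        rw [Set.range_comp, Fin.range_succ, Fin.range_succAbove, Equiv.image_compl,
          Set.image_singleton])
  have hconst : ((√((m : ℝ) + 1) / (m + 1).factorial : ℝ) : ℂ) * (m.factorial : ℂ) =
      ((√((m : ℝ) + 1) : ℝ) : ℂ)⁻¹ := by
    rw [← Complex.ofReal_natCast, ← Complex.ofReal_mul, ← Complex.ofReal_inv, Nat.factorial_succ]
    congr 1
    have hm : (0 : ℝ) < m + 1 := by positivity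
    push_cast
    field_simp
    rw [Real.sq_sqrt hm.le]
  simp only [fockCre, hterm]
  rw [← Equiv.sum_comp Equiv.Perm.decomposeFin.symm, Fintype.sum_prod_type]
  simp only [Equiv.Perm.decomposeFin_symm_apply_zero, Finset.sum_const, Finset.card_univ,
    Fintype.card_perm, Fintype.card_fin, nsmul_eq_mul, Finset.mul_sum, ← mul_assoc, hconst]

lemma fockCre_succ_cons (g : α → ℂ) (Φ : ∀ n : ℕ, (Fin n → α) → ℂ) {n : ℕ}
    (hΦ : ∀ (σ : Equiv.Perm (Fin n)) (k : Fin n → α), Φ n (k ∘ σ) = Φ n k)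
    (x : α) (k : Fin n → α) :
    fockCre g Φ (n + 1) (Fin.cons x k) = ((√((n : ℝ) + 1) : ℝ) : ℂ)⁻¹ *
      (g x * Φ n k + ∑ j : Fin n,
        g (k j) * Φ n (Fin.removeNth j.succ (Fin.cons x k : Fin (n + 1) → α))) := by
  rw [fockCre_succ_eq_sum_removeNth g Φ hΦ, Fin.sum_univ_succ]
  simp only [Fin.cons_zero, Fin.cons_succ, Fin.removeNth_zero, Fin.tail_cons]

lemma fockCre_fockCre (f g : α → ℂ) (Φ : ∀ n : ℕ, (Fin n → α) → ℂ) (m : ℕ)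
    (k : Fin (m + 2) → α) :
    fockCre f (fockCre g Φ) (m + 2) k =
      ((√((m : ℝ) + 2) / (m + 2).factorial : ℝ) : ℂ) *
        ((√((m : ℝ) + 1) / (m + 1).factorial : ℝ) : ℂ) * (m + 1).factorial *
        ∑ ρ : Equiv.Perm (Fin (m + 2)),
          f (k (ρ 0)) * g (k (ρ 1)) * Φ m (fun i => k (ρ i.succ.succ)) := by
  set T : Equiv.Perm (Fin (m + 2)) → ℂ :=
    fun ρ => f (k (ρ 0)) * g (k (ρ 1)) * Φ m (fun i => k (ρ i.succ.succ))
  -- `decomposeFin.symm (0, τ)` is `τ` acting on the last `m + 1` slots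
  have hinner : ∀ σ : Equiv.Perm (Fin (m + 2)),
      f (k (σ 0)) * fockCre g Φ (m + 1) (fun i => k (σ i.succ)) =
        ((√((m : ℝ) + 1) / (m + 1).factorial : ℝ) : ℂ) *
          ∑ τ, T (σ * Equiv.Perm.decomposeFin.symm (0, τ)) := by
    intro σ
    simp only [fockCre, T, Finset.mul_sum, Equiv.Perm.mul_apply,
      Equiv.Perm.decomposeFin_symm_apply_zero, ← Fin.succ_zero_eq_one,
      Equiv.Perm.decomposeFin_symm_apply_succ, Equiv.swap_self, Equiv.refl_apply]
    exact Finset.sum_congr rfl fun τ _ => by ring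
  have hsum : ∀ τ : Equiv.Perm (Fin (m + 1)),
      ∑ σ, T (σ * Equiv.Perm.decomposeFin.symm (0, τ)) = ∑ ρ, T ρ := fun τ =>
    Equiv.sum_comp (Equiv.mulRight _) T
  rw [fockCre]
  simp only [hinner, ← Finset.mul_sum]
  rw [Finset.sum_comm]
  simp only [hsum, Finset.sum_const, Finset.card_univ, Fintype.card_perm, Fintype.card_fin,
    nsmul_eq_mul]
  rw [Nat.cast_succ, add_assoc, one_add_one_eq_two]
  ring

lemma fockCre_fockCre_comm (f g : α → ℂ) (Φ : ∀ n : ℕ, (Fin n → α) → ℂ) (n : ℕ)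
    (k : Fin n → α) : fockCre f (fockCre g Φ) n k = fockCre g (fockCre f Φ) n k := by
  match n with
  | 0 => rfl
  | 1 => simp [fockCre]
  | m + 2 =>
    rw [fockCre_fockCre, fockCre_fockCre]
    congr 1
    refine Fintype.sum_equiv (Equiv.mulRight (Equiv.swap 0 1)) _ _ fun ρ => ?_
    have hfix : ∀ i : Fin m, Equiv.swap (0 : Fin (m + 2)) 1 i.succ.succ = i.succ.succ :=
      fun i => Equiv.swap_apply_of_ne_of_ne (Fin.succ_ne_zero _) (Fin.succ_succ_ne_one i)
    simp only [Equiv.coe_mulRight, Equiv.Perm.mul_apply, Equiv.swap_apply_left,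
      Equiv.swap_apply_right, hfix]
    ring

end Creation

section Commutator

variable {α : Type*} [MeasurableSpace α] (μ : Measure α)

lemma ofReal_sqrt_succ_ne_zero (n : ℕ) : ((√((n : ℝ) + 1) : ℝ) : ℂ) ≠ 0 :=
  Complex.ofReal_ne_zero.mpr (by positivity)

lemma fockAnn_fockCre {f g : α → ℂ} {Φ : ∀ n : ℕ, (Fin n → α) → ℂ} {n : ℕ}
    (hfg : Integrable (fun x => f x * g x) μ)
    (hΦ : ∀ (σ : Equiv.Perm (Fin n)) (k : Fin n → α), Φ n (k ∘ σ) = Φ n k) (k : Fin n → α)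
    (hint : ∀ j : Fin n, Integrable
      (fun x => f x * Φ n (Fin.removeNth j.succ (Fin.cons x k : Fin (n + 1) → α))) μ) :
    fockAnn μ f (fockCre g Φ) n k = (∫ x, f x * g x ∂μ) * Φ n k +
      ∑ j : Fin n, g (k j) *
        ∫ x, f x * Φ n (Fin.removeNth j.succ (Fin.cons x k : Fin (n + 1) → α)) ∂μ := by
  have hpt : ∀ x, f x * fockCre g Φ (n + 1) (Fin.cons x k) =
      ((√((n : ℝ) + 1) : ℝ) : ℂ)⁻¹ * (f x * g x * Φ n k + ∑ j : Fin n,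
        g (k j) * (f x * Φ n (Fin.removeNth j.succ (Fin.cons x k : Fin (n + 1) → α)))) := by
    intro x
    rw [fockCre_succ_cons g Φ hΦ, mul_left_comm, mul_add, Finset.mul_sum]
    congr 2
    · ring
    · exact Finset.sum_congr rfl fun j _ => mul_left_comm _ _ _
  have hsum : Integrable (fun x => ∑ j : Fin n,
      g (k j) * (f x * Φ n (Fin.removeNth j.succ (Fin.cons x k : Fin (n + 1) → α)))) μ :=
    integrable_finsetSum _ fun j _ => (hint j).const_mul _
  rw [fockAnn, funext hpt, integral_const_mul, mul_inv_cancel_left₀ (ofReal_sqrt_succ_ne_zero n),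
    integral_add (hfg.mul_const _) hsum, integral_mul_const,
    integral_finsetSum _ fun j _ => (hint j).const_mul _]
  simp only [integral_const_mul]

lemma fockCre_fockAnn (f g : α → ℂ) {Φ : ∀ n : ℕ, (Fin n → α) → ℂ} {n : ℕ}
    (hΦ : ∀ (σ : Equiv.Perm (Fin n)) (k : Fin n → α), Φ n (k ∘ σ) = Φ n k) (k : Fin n → α) :
    fockCre g (fockAnn μ f Φ) n k = ∑ j : Fin n, g (k j) *
      ∫ x, f x * Φ n (Fin.removeNth j.succ (Fin.cons x k : Fin (n + 1) → α)) ∂μ := by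
  cases n with
  | zero => simp [fockCre]
  | succ m =>
    rw [fockCre_succ_eq_sum_removeNth g _ (fockAnn_comp_perm μ f hΦ), Finset.mul_sum]
    refine Finset.sum_congr rfl fun j _ => ?_
    simp only [fockAnn, removeNth_succ_cons]
    rw [mul_left_comm, inv_mul_cancel_left₀ (ofReal_sqrt_succ_ne_zero m)]

lemma fockAnn_fockCre_sub_fockCre_fockAnn {f g : α → ℂ} {Φ : ∀ n : ℕ, (Fin n → α) → ℂ}
    {n : ℕ} (hfg : Integrable (fun x => f x * g x) μ)
    (hΦ : ∀ (σ : Equiv.Perm (Fin n)) (k : Fin n → α), Φ n (k ∘ σ) = Φ n k)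
    (hfΦ : ∀ m (k : Fin m → α), Integrable (fun x => f x * Φ (m + 1) (Fin.cons x k)) μ)
    (k : Fin n → α) :
    fockAnn μ f (fockCre g Φ) n k - fockCre g (fockAnn μ f Φ) n k =
      (∫ x, f x * g x ∂μ) * Φ n k := by
  have hint : ∀ j : Fin n, Integrable
      (fun x => f x * Φ n (Fin.removeNth j.succ (Fin.cons x k : Fin (n + 1) → α))) μ := by
    cases n with
    | zero => exact fun j => j.elim0
    | succ m => simpa only [removeNth_succ_cons] using fun j => hfΦ m (Fin.removeNth j k)
  rw [fockAnn_fockCre μ hfg hΦ k hint, fockCre_fockAnn μ f g hΦ k, add_sub_cancel_right]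

end Commutator

theorem stmt_10_general {α : Type*} [MeasurableSpace α] (μ : Measure α) [SigmaFinite μ]
    (f g : α → ℂ)
    (hfg : Integrable (fun x => f x * g x) μ)
    (Φ : ∀ n : ℕ, (Fin n → α) → ℂ)
    (hΦsym : ∀ n (σ : Equiv.Perm (Fin n)) (k : Fin n → α), Φ n (k ∘ σ) = Φ n k)
    -- integrability hypotheses making all the iterated integrals absolutely convergent
    (hint₁ : ∀ n (k : Fin n → α),
        Integrable (fun x => f x * Φ (n + 1) (Fin.cons x k)) μ)
    (hint₆ : ∀ n (k : Fin n → α),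
        Integrable (fun p : α × α =>
          f p.1 * g p.2 * Φ (n + 2) (Fin.cons p.1 (Fin.cons p.2 k))) (μ.prod μ)) :
    (∀ n (k : Fin n → α),
        fockAnn μ f (fockAnn μ g Φ) n k - fockAnn μ g (fockAnn μ f Φ) n k = 0) ∧
    (∀ n (k : Fin n → α),
        fockCre f (fockCre g Φ) n k - fockCre g (fockCre f Φ) n k = 0) ∧
    (∀ n (k : Fin n → α),
        fockAnn μ f (fockCre g Φ) n k - fockCre g (fockAnn μ f Φ) n k
          = (∫ x, f x * g x ∂μ) * Φ n k) :=
  ⟨fun n k => sub_eq_zero.mpr (fockAnn_fockAnn_comm μ (hΦsym (n + 2)) k (hint₆ n k)),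
    fun n k => sub_eq_zero.mpr (fockCre_fockCre_comm f g Φ n k),
    fun n k => fockAnn_fockCre_sub_fockCre_fockAnn μ hfg (hΦsym n) hint₁ k⟩

/-- Canonical commutation relations on the finite-particle subspace:
`[a(f), a(g)] = 0`, `[a†(f), a†(g)] = 0`, `[a(f), a†(g)] = ⟨f̄, g⟩ = ∫ f g dμ`. -/
theorem stmt_10 {α : Type*} [MeasurableSpace α] (μ : Measure α) [SigmaFinite μ]
    (f g : α → ℂ) (hfm : Measurable f) (hgm : Measurable g)
    (hfg : Integrable (fun x => f x * g x) μ)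
    (Φ : ∀ n : ℕ, (Fin n → α) → ℂ)
    (hΦm : ∀ n, Measurable (Φ n))
    (hΦsym : ∀ n (σ : Equiv.Perm (Fin n)) (k : Fin n → α), Φ n (k ∘ σ) = Φ n k)
    (hΦfin : ∃ n₀ : ℕ, ∀ n, n₀ ≤ n → Φ n = 0)
    -- integrability hypotheses making all the iterated integrals absolutely convergent
    (hint₁ : ∀ n (k : Fin n → α),
        Integrable (fun x => f x * Φ (n + 1) (Fin.cons x k)) μ)
    (hint₂ : ∀ n (k : Fin n → α),
        Integrable (fun x => g x * Φ (n + 1) (Fin.cons x k)) μ)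
    (hint₃ : ∀ n (k : Fin n → α),
        Integrable (fun x => f x * fockAnn μ g Φ (n + 1) (Fin.cons x k)) μ)
    (hint₄ : ∀ n (k : Fin n → α),
        Integrable (fun x => g x * fockAnn μ f Φ (n + 1) (Fin.cons x k)) μ)
    (hint₅ : ∀ n (k : Fin n → α),
        Integrable (fun x => f x * fockCre g Φ (n + 1) (Fin.cons x k)) μ)
    (hint₆ : ∀ n (k : Fin n → α),
        Integrable (fun p : α × α =>
          f p.1 * g p.2 * Φ (n + 2) (Fin.cons p.1 (Fin.cons p.2 k))) (μ.prod μ)) :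
    (∀ n (k : Fin n → α),
        fockAnn μ f (fockAnn μ g Φ) n k - fockAnn μ g (fockAnn μ f Φ) n k = 0) ∧
    (∀ n (k : Fin n → α),
        fockCre f (fockCre g Φ) n k - fockCre g (fockCre f Φ) n k = 0) ∧
    (∀ n (k : Fin n → α),
        fockAnn μ f (fockCre g Φ) n k - fockCre g (fockAnn μ f Φ) n k
          = (∫ x, f x * g x ∂μ) * Φ n k) :=
  stmt_10_general μ f g hfg Φ hΦsym hint₁ hint₆
end

section
/- Let q be a closed, lower-bounded symmetric quadratic form with ground state energy E = inf{q(Ψ,Ψ) : ‖Ψ‖ = 1, Ψ ∈ Q(q)}. Suppose that for every normalized sequence {Ψ^j} ⊂ Q(q) converging weakly to 0 in the underlying Hilbert space, liminf_j q(Ψ^j, Ψ^j) > E holds. Then E is an eigenvalue of the self-adjoint operator associated with q (i.e., a ground state exists). -/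
/-!
Take a minimizing sequence and, by weak sequential compactness of the unit ball, a weakly
convergent subsequence `X`. The excess `q(x,x) - E‖x‖²` is nonnegative on `D` and satisfies the
parallelogram law, so it is small on differences `X m - X n` of late terms. If `X` were not
norm-Cauchy, normalized such differences would be weakly null with energies tending to `E`,
contradicting the liminf gap. So `X` converges in norm and is `q`-Cauchy, and closedness of `q`
puts its limit in `D`, with energy `E`.
-/

open Filter Topology TopologicalSpace
open scoped InnerProductSpace

theorem exists_subseq_tendsto_inner {𝕜 H : Type*} [RCLike 𝕜] [NormedAddCommGroup H]
    [InnerProductSpace 𝕜 H] [CompleteSpace H] {x : ℕ → H} {C : ℝ} (hx : ∀ n, ‖x n‖ ≤ C) :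
    ∃ φ : ℕ → ℕ, StrictMono φ ∧ ∃ z : H,
      ∀ y, Tendsto (fun k => ⟪y, x (φ k)⟫_𝕜) atTop (𝓝 ⟪y, z⟫_𝕜) := by
  -- Sequential Banach–Alaoglu applies in the separable closed span `K` of the sequence; the
  -- orthogonal projection onto `K` transfers the convergence to every `y : H`.
  set K := (Submodule.span 𝕜 (Set.range x)).topologicalClosure
  have hxK : ∀ n, x n ∈ K :=
    fun n => Submodule.le_topologicalClosure _ (Submodule.subset_span ⟨n, rfl⟩)
  have : SeparableSpace K := by
    have : IsSeparable (K : Set H) := by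
      rw [Submodule.topologicalClosure_coe]
      exact (Set.countable_range x).isSeparable.span.closure
    exact this.separableSpace
  have : CompleteSpace K := (Submodule.isClosed_topologicalClosure _).completeSpace_coe
  let f : ℕ → WeakDual 𝕜 K := fun n =>
    StrongDual.toWeakDual (InnerProductSpace.toDual 𝕜 K ⟨x n, hxK n⟩)
  obtain ⟨ℓ, -, φ, hφ, hlim⟩ :=
    WeakDual.isSeqCompact_closedBall 𝕜 K 0 C (x := f) (fun n => by simpa [f] using hx n)
  refine ⟨φ, hφ, (InnerProductSpace.toDual 𝕜 K).symm (WeakDual.toStrongDual ℓ), fun y => ?_⟩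
  have hy := (RCLike.continuous_conj.tendsto _).comp
    (((WeakDual.eval_continuous (K.orthogonalProjectionOnto y)).tendsto ℓ).comp hlim)
  convert hy using 1
  · ext k
    simp [f]
  · rw [← WeakDual.toStrongDual_apply, ← InnerProductSpace.toDual_symm_apply,
      Submodule.inner_orthogonalProjectionOnto_eq_of_mem_left, inner_conj_symm]

section Form

variable {H : Type*} [NormedAddCommGroup H] [InnerProductSpace ℂ H] {q : H → H → ℝ}
  {D : Submodule ℂ H} {E : ℝ}

lemma form_ofReal_smul_self (hsymm : ∀ x y, q x y = q y x)
    (hsmull : ∀ (r : ℝ) (x y : H), q ((r : ℂ) • x) y = r * q x y) (r : ℝ) (x : H) :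
    q ((r : ℂ) • x) ((r : ℂ) • x) = r ^ 2 * q x x := by
  rw [hsmull, hsymm, hsmull, hsymm]
  ring

lemma form_parallelogram (hsymm : ∀ x y, q x y = q y x)
    (haddl : ∀ x y z, q (x + y) z = q x z + q y z)
    (hsmull : ∀ (r : ℝ) (x y : H), q ((r : ℂ) • x) y = r * q x y) (x y : H) :
    q (x + y) (x + y) + q (x - y) (x - y) = 2 * (q x x + q y y) := by
  have hnegl : ∀ x y, q (-x) y = -q x y := fun x y => by simpa using hsmull (-1) x y
  have haddr : ∀ x y z, q x (y + z) = q x y + q x z := fun x y z => by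
    rw [hsymm, haddl, hsymm y, hsymm z]
  have hnegr : ∀ x y, q x (-y) = -q x y := fun x y => by rw [hsymm, hnegl, hsymm]
  simp only [sub_eq_add_neg, haddl, haddr, hnegl, hnegr]
  ring

lemma mul_norm_sq_le_form (hsymm : ∀ x y, q x y = q y x)
    (hsmull : ∀ (r : ℝ) (x y : H), q ((r : ℂ) • x) y = r * q x y)
    (hE : E ∈ lowerBounds {r | ∃ Ψ ∈ D, ‖Ψ‖ = 1 ∧ q Ψ Ψ = r}) {x : H} (hx : x ∈ D) :
    E * ‖x‖ ^ 2 ≤ q x x := by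
  rcases eq_or_ne x 0 with rfl | hx0
  · have hq0 : q 0 0 = 0 := by simpa using form_ofReal_smul_self hsymm hsmull 0 0
    simp [hq0]
  have hnorm : 0 < ‖x‖ := norm_pos_iff.mpr hx0
  set u := ((‖x‖⁻¹ : ℝ) : ℂ) • x
  have hu : ‖u‖ = 1 := by simp [u, norm_smul, hnorm.ne']
  calc E * ‖x‖ ^ 2 ≤ q u u * ‖x‖ ^ 2 := by
        gcongr
        exact hE ⟨u, D.smul_mem _ hx, hu, rfl⟩
    _ = q x x := by rw [form_ofReal_smul_self hsymm hsmull]; field_simp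

lemma form_excess_sub_le (hsymm : ∀ x y, q x y = q y x)
    (haddl : ∀ x y z, q (x + y) z = q x z + q y z)
    (hsmull : ∀ (r : ℝ) (x y : H), q ((r : ℂ) • x) y = r * q x y)
    (hE : E ∈ lowerBounds {r | ∃ Ψ ∈ D, ‖Ψ‖ = 1 ∧ q Ψ Ψ = r}) {x y : H}
    (hx : x ∈ D) (hy : y ∈ D) :
    q (x - y) (x - y) - E * ‖x - y‖ ^ 2 ≤
      2 * (q x x - E * ‖x‖ ^ 2) + 2 * (q y y - E * ‖y‖ ^ 2) := by
  have hadd := mul_norm_sq_le_form hsymm hsmull hE (D.add_mem hx hy)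
  have hq := form_parallelogram hsymm haddl hsmull x y
  have hnorm := parallelogram_law_with_norm ℂ x y
  linear_combination hadd + hq - E * hnorm

lemma tendsto_form_inv_norm_smul (hsymm : ∀ x y, q x y = q y x)
    (hsmull : ∀ (r : ℝ) (x y : H), q ((r : ℂ) • x) y = r * q x y) {ζ : ℕ → H} {ε : ℝ}
    (hε : 0 < ε) (hζ : ∀ N, ε ≤ ‖ζ N‖)
    (hζq : Tendsto (fun N => q (ζ N) (ζ N) - E * ‖ζ N‖ ^ 2) atTop (𝓝 0)) :
    Tendsto (fun N => q (((‖ζ N‖⁻¹ : ℝ) : ℂ) • ζ N) (((‖ζ N‖⁻¹ : ℝ) : ℂ) • ζ N)) atTop (𝓝 E) := by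
  have hζ_pos : ∀ N, 0 < ‖ζ N‖ := fun N => hε.trans_le (hζ N)
  have hq : ∀ N, q (((‖ζ N‖⁻¹ : ℝ) : ℂ) • ζ N) (((‖ζ N‖⁻¹ : ℝ) : ℂ) • ζ N) - E =
      (‖ζ N‖ ^ 2)⁻¹ * (q (ζ N) (ζ N) - E * ‖ζ N‖ ^ 2) := fun N => by
    rw [form_ofReal_smul_self hsymm hsmull]
    field_simp [(hζ_pos N).ne']
  rw [← tendsto_sub_nhds_zero_iff]
  refine squeeze_zero_norm (fun N => ?_) ((hζq.norm.const_mul (ε ^ 2)⁻¹).trans (by simp))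
  rw [hq, norm_mul, norm_inv, Real.norm_of_nonneg (by positivity)]
  gcongr
  exact hζ N

theorem cauchySeq_of_liminf_gap (hsymm : ∀ x y, q x y = q y x)
    (haddl : ∀ x y z, q (x + y) z = q x z + q y z)
    (hsmull : ∀ (r : ℝ) (x y : H), q ((r : ℂ) • x) y = r * q x y)
    (hE : E ∈ lowerBounds {r | ∃ Ψ ∈ D, ‖Ψ‖ = 1 ∧ q Ψ Ψ = r})
    (hweak : ∀ Ψ : ℕ → H, (∀ j, Ψ j ∈ D) → (∀ j, ‖Ψ j‖ = 1) →
        (∀ φ : H, Tendsto (fun j => ⟪φ, Ψ j⟫_ℂ) atTop (𝓝 0)) →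
        E < liminf (fun j => q (Ψ j) (Ψ j)) atTop)
    {X : ℕ → H} (hXD : ∀ k, X k ∈ D)
    (hX : Tendsto (fun k => q (X k) (X k) - E * ‖X k‖ ^ 2) atTop (𝓝 0))
    {z : H} (hXz : ∀ y, Tendsto (fun k => ⟪y, X k⟫_ℂ) atTop (𝓝 ⟪y, z⟫_ℂ)) :
    CauchySeq X := by
  by_contra hcauchy
  obtain ⟨ε, hε, hfar⟩ : ∃ ε > 0, ∀ N, ∃ m ≥ N, ∃ n ≥ N, ε ≤ ‖X m - X n‖ := by
    simpa [Metric.cauchySeq_iff, dist_eq_norm] using hcauchy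
  choose m hm n hn hmn using hfar
  set ζ : ℕ → H := fun N => X (m N) - X (n N)
  have hζ_pos : ∀ N, 0 < ‖ζ N‖ := fun N => hε.trans_le (hmn N)
  have hζD : ∀ N, ζ N ∈ D := fun N => D.sub_mem (hXD _) (hXD _)
  have hζq : Tendsto (fun N => q (ζ N) (ζ N) - E * ‖ζ N‖ ^ 2) atTop (𝓝 0) := by
    have hbound := ((hX.comp (tendsto_atTop_mono hm tendsto_id)).const_mul 2).add
      ((hX.comp (tendsto_atTop_mono hn tendsto_id)).const_mul 2)
    refine squeeze_zero (fun N => sub_nonneg.mpr (mul_norm_sq_le_form hsymm hsmull hE (hζD N)))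
      (fun N => form_excess_sub_le hsymm haddl hsmull hE (hXD (m N)) (hXD (n N)))
      (by simpa using hbound)
  have hζ_weak : ∀ y, Tendsto (fun N => ⟪y, ζ N⟫_ℂ) atTop (𝓝 0) := fun y => by
    simpa [ζ, inner_sub_right] using
      ((hXz y).comp (tendsto_atTop_mono hm tendsto_id)).sub
        ((hXz y).comp (tendsto_atTop_mono hn tendsto_id))
  set χ : ℕ → H := fun N => ((‖ζ N‖⁻¹ : ℝ) : ℂ) • ζ N
  have hχ_norm : ∀ N, ‖χ N‖ = 1 := fun N => by simp [χ, norm_smul, (hζ_pos N).ne']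
  have hχ_weak : ∀ y, Tendsto (fun N => ⟪y, χ N⟫_ℂ) atTop (𝓝 0) := fun y => by
    refine squeeze_zero_norm (fun N => ?_) ((hζ_weak y).norm.const_mul ε⁻¹ |>.trans (by simp))
    rw [inner_smul_right, norm_mul, Complex.norm_real, Real.norm_of_nonneg (by positivity)]
    gcongr
    exact hmn N
  have hχ_q := tendsto_form_inv_norm_smul hsymm hsmull hε hmn hζq
  exact (hweak χ (fun N => D.smul_mem _ (hζD N)) hχ_norm hχ_weak).ne hχ_q.liminf_eq.symm

theorem mem_and_form_self_eq_of_tendsto (hsymm : ∀ x y, q x y = q y x)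
    (haddl : ∀ x y z, q (x + y) z = q x z + q y z)
    (hsmull : ∀ (r : ℝ) (x y : H), q ((r : ℂ) • x) y = r * q x y)
    (hE : E ∈ lowerBounds {r | ∃ Ψ ∈ D, ‖Ψ‖ = 1 ∧ q Ψ Ψ = r})
    (hclosed : ∀ (Ψ : ℕ → H) (Ψlim : H), (∀ i, Ψ i ∈ D) →
        Tendsto Ψ atTop (𝓝 Ψlim) →
        (∀ ε > 0, ∃ N, ∀ i ≥ N, ∀ j ≥ N, q (Ψ i - Ψ j) (Ψ i - Ψ j) < ε) →
        Ψlim ∈ D ∧ Tendsto (fun i => q (Ψ i - Ψlim) (Ψ i - Ψlim)) atTop (𝓝 0))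
    {X : ℕ → H} (hXD : ∀ k, X k ∈ D)
    (hX : Tendsto (fun k => q (X k) (X k) - E * ‖X k‖ ^ 2) atTop (𝓝 0))
    {z : H} (hXz : Tendsto X atTop (𝓝 z)) :
    z ∈ D ∧ q z z = E * ‖z‖ ^ 2 := by
  have hq_cauchy : ∀ ε > 0, ∃ N, ∀ i ≥ N, ∀ j ≥ N, q (X i - X j) (X i - X j) < ε := by
    intro ε hε
    have hdist : Tendsto (fun p : ℕ × ℕ => ‖X p.1 - X p.2‖) atTop (𝓝 0) := by
      simpa [dist_eq_norm] using cauchySeq_iff_tendsto_dist_atTop_0.mp hXz.cauchySeq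
    have hbound := (((hX.comp (tendsto_fst.mono_left prod_atTop_atTop_eq.ge)).const_mul 2).add
      ((hX.comp (tendsto_snd.mono_left prod_atTop_atTop_eq.ge)).const_mul 2)).add
      ((hdist.pow 2).const_mul E)
    obtain ⟨N, hN⟩ := eventually_atTop_prod_self'.mp
      (hbound.eventually (gt_mem_nhds (by simpa using hε)))
    refine ⟨N, fun i hi j hj => ?_⟩
    have := form_excess_sub_le hsymm haddl hsmull hE (hXD i) (hXD j)
    simp only [Function.comp_apply] at hN
    linarith [hN i hi j hj]
  obtain ⟨hzD, hXz_q⟩ := hclosed X z hXD hXz hq_cauchy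
  refine ⟨hzD, le_antisymm ?_ (mul_norm_sq_le_form hsymm hsmull hE hzD)⟩
  have hbound := (hX.const_mul 2).add
    ((hXz_q.sub ((tendsto_iff_norm_sub_tendsto_zero.mp hXz).pow 2 |>.const_mul E)).const_mul 2)
  have := ge_of_tendsto' (by simpa using hbound) fun k => by
    simpa only [sub_sub_cancel] using
      form_excess_sub_le hsymm haddl hsmull hE (hXD k) (D.sub_mem (hXD k) hzD)
  linarith

end Form

theorem stmt_19_general {H : Type*} [NormedAddCommGroup H] [InnerProductSpace ℂ H]
    [CompleteSpace H]
    (D : Submodule ℂ H)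
    (q : H → H → ℝ) (E : ℝ)
    (hsymm : ∀ x y, q x y = q y x)
    (haddl : ∀ x y z, q (x + y) z = q x z + q y z)
    (hsmull : ∀ (r : ℝ) (x y : H), q ((r : ℂ) • x) y = r * q x y)
    (hE : IsGLB {r : ℝ | ∃ Ψ ∈ D, ‖Ψ‖ = 1 ∧ q Ψ Ψ = r} E)
    (hclosed : ∀ (Ψ : ℕ → H) (Ψlim : H), (∀ i, Ψ i ∈ D) →
        Tendsto Ψ atTop (nhds Ψlim) →
        (∀ ε > 0, ∃ N, ∀ i ≥ N, ∀ j ≥ N, q (Ψ i - Ψ j) (Ψ i - Ψ j) < ε) →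
        Ψlim ∈ D ∧ Tendsto (fun i => q (Ψ i - Ψlim) (Ψ i - Ψlim)) atTop (nhds 0))
    (hweak : ∀ Ψ : ℕ → H, (∀ j, Ψ j ∈ D) → (∀ j, ‖Ψ j‖ = 1) →
        (∀ φ : H, Tendsto (fun j => (inner ℂ φ (Ψ j) : ℂ)) atTop (nhds 0)) →
        E < liminf (fun j => q (Ψ j) (Ψ j)) atTop) :
    ∃ Φ, Φ ∈ D ∧ ‖Φ‖ = 1 ∧ q Φ Φ = E := by
  obtain ⟨r, -, -, hr, hrS⟩ := hE.exists_seq_antitone_tendsto hE.nonempty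
  choose Φ hΦD hΦ_norm hΦr using hrS
  obtain ⟨φ, hφ, w, hw⟩ := exists_subseq_tendsto_inner (𝕜 := ℂ) fun j => (hΦ_norm j).le
  set X := Φ ∘ φ
  have hXD : ∀ k, X k ∈ D := fun k => hΦD _
  have hX : Tendsto (fun k => q (X k) (X k) - E * ‖X k‖ ^ 2) atTop (𝓝 0) := by
    simpa [X, hΦ_norm, hΦr] using (hr.comp hφ.tendsto_atTop).sub_const E
  obtain ⟨z, hXz⟩ := cauchySeq_tendsto_of_complete
    (cauchySeq_of_liminf_gap hsymm haddl hsmull hE.1 hweak hXD hX hw)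
  have hz_norm : ‖z‖ = 1 := tendsto_nhds_unique hXz.norm (by simp [X, hΦ_norm])
  obtain ⟨hzD, hqz⟩ := mem_and_form_self_eq_of_tendsto hsymm haddl hsmull hE.1 hclosed hXD hX hXz
  exact ⟨z, hzD, hz_norm, by rw [hqz, hz_norm]; ring⟩

/-- Existence of a ground state from the weak lower-semicontinuity gap: if `q` is a
closed, lower-bounded symmetric quadratic form with ground state energy
`E = inf {q(Ψ,Ψ) : Ψ ∈ Q(q), ‖Ψ‖ = 1}`, and every normalized sequence in the form
domain converging weakly to `0` in `H` satisfies `liminf q(Ψʲ,Ψʲ) > E`, then the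
infimum is attained: there is a normalized `Φ` in the form domain with `q(Φ,Φ) = E`
(i.e. `E` is an eigenvalue of the associated self-adjoint operator). -/
theorem stmt_19 {H : Type*} [NormedAddCommGroup H] [InnerProductSpace ℂ H]
    [CompleteSpace H]
    (D : Submodule ℂ H) (hdense : Dense (D : Set H))
    (q : H → H → ℝ) (E : ℝ)
    (hsymm : ∀ x y, q x y = q y x)
    (haddl : ∀ x y z, q (x + y) z = q x z + q y z)
    (hsmull : ∀ (r : ℝ) (x y : H), q ((r : ℂ) • x) y = r * q x y)
    (hlb : ∃ c : ℝ, ∀ x ∈ D, c * ‖x‖ ^ 2 ≤ q x x)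
    (hE : IsGLB {r : ℝ | ∃ Ψ ∈ D, ‖Ψ‖ = 1 ∧ q Ψ Ψ = r} E)
    (hclosed : ∀ (Ψ : ℕ → H) (Ψlim : H), (∀ i, Ψ i ∈ D) →
        Tendsto Ψ atTop (nhds Ψlim) →
        (∀ ε > 0, ∃ N, ∀ i ≥ N, ∀ j ≥ N, q (Ψ i - Ψ j) (Ψ i - Ψ j) < ε) →
        Ψlim ∈ D ∧ Tendsto (fun i => q (Ψ i - Ψlim) (Ψ i - Ψlim)) atTop (nhds 0))
    (hweak : ∀ Ψ : ℕ → H, (∀ j, Ψ j ∈ D) → (∀ j, ‖Ψ j‖ = 1) →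
        (∀ φ : H, Tendsto (fun j => (inner ℂ φ (Ψ j) : ℂ)) atTop (nhds 0)) →
        E < liminf (fun j => q (Ψ j) (Ψ j)) atTop) :
    ∃ Φ, Φ ∈ D ∧ ‖Φ‖ = 1 ∧ q Φ Φ = E :=
  stmt_19_general D q E hsymm haddl hsmull hE hclosed hweak
end
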